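/- Let G be a factorizable finite simple graph, M a perfect matching of G, G1 a factor-component of G, and X ⊆ V(G) a separating set with V(G1) ⊆ X. Then X is a critical-inducing set for G1 (i.e., G[X]/G1 is factor-critical) if and only if for every x ∈ X ∖ V(G1) there exists y ∈ V(G1) such that there is an M-balanced path from x to y all of whose vertices except y lie in X ∖ V(G1). -/

import Mathlib

/-!
Write `A = X \ C1`. Edges of `M` are allowed, hence never leave a factor-component, so `M`
restricts to a perfect matching `M_A` of `G[A]`. A perfect matching of `G[X]/C1 - x` is the
same as a perfect matching `N` of `G[A ∪ {s}] - x` for some `s ∈ C1` (the vertex of `C1` used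
by the edge at the contracted vertex). The symmetric difference of `M_A` and `N` is a single
`M`-balanced path from `x` to `s` inside `A ∪ {s}`; conversely, switching `M_A` along such a
path yields `N`. Deleting the contracted vertex itself leaves `G[A]`, matched by `M_A`.
-/

open SimpleGraph

variable {V : Type*}

/-- A set of edges is pairwise vertex-disjoint. -/
def DisjointEdges (N : Set (Sym2 V)) : Prop :=
  ∀ e ∈ N, ∀ f ∈ N, e ≠ f → ∀ x : V, x ∈ e → x ∉ f

/-- `M` is a matching of `G`: a set of pairwise vertex-disjoint edges of `G`. -/
def IsMatchingSet (G : SimpleGraph V) (M : Set (Sym2 V)) : Prop :=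
  M ⊆ G.edgeSet ∧ DisjointEdges M

/-- `M` is a perfect matching of `G`: a matching covering every vertex. -/
def IsPerfectMatchingSet (G : SimpleGraph V) (M : Set (Sym2 V)) : Prop :=
  IsMatchingSet G M ∧ ∀ v : V, ∃ e ∈ M, v ∈ e

/-- `M` is a near-perfect matching of `G` whose unique exposed vertex is `v`. -/
def IsNearPerfectMatchingSet (G : SimpleGraph V) (M : Set (Sym2 V)) (v : V) : Prop :=
  IsMatchingSet G M ∧ (∀ e ∈ M, v ∉ e) ∧ ∀ u : V, u ≠ v → ∃ e ∈ M, u ∈ e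

/-- The induced subgraph `G[X]` has a perfect matching. -/
def HasPMOn (G : SimpleGraph V) (X : Set V) : Prop :=
  ∃ M : Set (Sym2 V), IsMatchingSet G M ∧ (∀ e ∈ M, ∀ x : V, x ∈ e → x ∈ X) ∧
    ∀ v ∈ X, ∃ e ∈ M, v ∈ e

/-- `G` is factorizable: it has a perfect matching. -/
def Factorizable (G : SimpleGraph V) : Prop :=
  ∃ M : Set (Sym2 V), IsPerfectMatchingSet G M

/-- `G` is factor-critical: deleting any single vertex leaves a factorizable graph. -/
def FactorCritical (G : SimpleGraph V) : Prop :=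
  ∀ v : V, HasPMOn G {v}ᶜ

/-- A walk is `M`-alternating: its edges outside `M` are pairwise vertex-disjoint. -/
def MAlternating (M : Set (Sym2 V)) {G : SimpleGraph V} {u v : V} (p : G.Walk u v) : Prop :=
  ∀ e ∈ p.edges, ∀ f ∈ p.edges, e ∉ M → f ∉ M → e ≠ f → ∀ x : V, x ∈ e → x ∉ f

/-- An `M`-saturated path: a path with an odd number of edges such that `M ∩ E(P)`
is a perfect matching of `P`. -/
def IsSaturatedPath (M : Set (Sym2 V)) {G : SimpleGraph V} {u v : V} (p : G.Walk u v) : Prop :=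
  p.IsPath ∧ Odd p.length ∧ ∀ x ∈ p.support, ∃ e ∈ p.edges, e ∈ M ∧ x ∈ e

/-- An `M`-exposed path: a path with an odd number of edges such that `E(P) \ M`
is a perfect matching of `P`. -/
def IsExposedPath (M : Set (Sym2 V)) {G : SimpleGraph V} {u v : V} (p : G.Walk u v) : Prop :=
  p.IsPath ∧ Odd p.length ∧ ∀ x ∈ p.support, ∃ e ∈ p.edges, e ∉ M ∧ x ∈ e

/-- An `M`-balanced path from `u` to `v`: an `M`-alternating path with an even number
of edges whose first edge (the one incident with `u`) belongs to `M`; a trivial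
one-vertex path is `M`-balanced. -/
def IsBalancedPath (M : Set (Sym2 V)) {G : SimpleGraph V} {u v : V} (p : G.Walk u v) : Prop :=
  p.IsPath ∧ Even p.length ∧ MAlternating M p ∧ ∀ e ∈ p.edges.head?, e ∈ M

/-- An edge of `G` is allowed if it lies in some perfect matching of `G`. -/
def Allowed (G : SimpleGraph V) (e : Sym2 V) : Prop :=
  ∃ M : Set (Sym2 V), IsPerfectMatchingSet G M ∧ e ∈ M

/-- The spanning subgraph of `G` formed by its allowed edges. -/
def allowedSubgraph (G : SimpleGraph V) : SimpleGraph V where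
  Adj u v := G.Adj u v ∧ Allowed G s(u, v)
  symm := by
    constructor
    intro u v h
    refine ⟨h.1.symm, ?_⟩
    rw [Sym2.eq_swap]
    exact h.2
  loopless := ⟨fun v h => G.loopless.irrefl v h.1⟩

/-- `C` is (the vertex set of) a factor-component of `G`: a connected component of the
spanning subgraph of `G` formed by the allowed edges (the factor-component itself being
the induced subgraph `G[C]`). -/
def IsFactorComponent (G : SimpleGraph V) (C : Set V) : Prop :=
  ∃ c : (allowedSubgraph G).ConnectedComponent, C = c.supp

/-- `G` is elementary: it is factorizable and has exactly one factor-component. -/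
def Elementary (G : SimpleGraph V) : Prop :=
  Factorizable G ∧ (allowedSubgraph G).Connected

/-- `X` is a separating set of `G`. -/
def Separating (G : SimpleGraph V) (X : Set V) : Prop :=
  ∀ C : Set V, IsFactorComponent G C → C ⊆ X ∨ Disjoint C X

/-- The contraction `G[X]/S`: the induced subgraph of `G` on `X` with `S` contracted
to a single vertex (the vertex `none`), deleting loops and parallel edges. -/
def contractOn (G : SimpleGraph V) (X S : Set V) : SimpleGraph (Option ↥(X \ S)) where
  Adj a b :=
    match a, b with
    | some x, some y => G.Adj x.1 y.1
    | some x, none => ∃ s ∈ S, G.Adj x.1 s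
    | none, some y => ∃ s ∈ S, G.Adj y.1 s
    | none, none => False
  symm := by
    constructor
    rintro (_ | x) (_ | y) h
    · exact h.elim
    · exact h
    · exact h
    · exact h.symm
  loopless := by
    constructor
    rintro (_ | x) h
    · exact h.elim
    · exact G.loopless.irrefl x.1 h

/-- `X` is a critical-inducing set for the factor-component (with vertex set) `C1`:
a separating set containing `C1` such that `G[X]/C1` is factor-critical. -/
def CriticalInducing (G : SimpleGraph V) (C1 X : Set V) : Prop :=
  Separating G X ∧ C1 ⊆ X ∧ FactorCritical (contractOn G X C1)

/-- `C1 ⊵ C2`: there is a critical-inducing set for `C1` to `C2`. -/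
def Yield (G : SimpleGraph V) (C1 C2 : Set V) : Prop :=
  ∃ X : Set V, CriticalInducing G C1 X ∧ C2 ⊆ X

/-- `u ∼ v`: `u = v` or `G - u - v` has no perfect matching. -/
def SimRel (G : SimpleGraph V) (u v : V) : Prop :=
  u = v ∨ ¬ HasPMOn G (({u, v} : Set V)ᶜ)

/-- An `M`-ear relative to the vertex set `X`: a path whose two end vertices lie in `X`
and whose internal vertices do not (or a cycle with exactly one vertex in `X`), such
that the ear minus `X` is an `M`-saturated path. -/
def IsMEar (G : SimpleGraph V) (M : Set (Sym2 V)) (X : Set V) {u v : V}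
    (p : G.Walk u v) : Prop :=
  u ∈ X ∧ v ∈ X ∧ ((∃ h : u = v, (p.copy rfl h.symm).IsCycle) ∨ (u ≠ v ∧ p.IsPath)) ∧
  ∃ (x y : V) (hux : G.Adj u x) (q : G.Walk x y) (hyv : G.Adj y v),
    p = SimpleGraph.Walk.cons hux (q.concat hyv) ∧
    IsSaturatedPath M q ∧ ∀ w ∈ q.support, w ∉ X

/-- An `M`-ear relative to `X` through (the factor-component with vertex set) `C`:
some internal vertex of the ear lies in `C`. -/
def IsMEarThrough (G : SimpleGraph V) (M : Set (Sym2 V)) (X C : Set V) {u v : V}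
    (p : G.Walk u v) : Prop :=
  IsMEar G M X p ∧ ∃ w ∈ p.support, w ∉ X ∧ w ∈ C

/-- An `M`-ear sequence `(H 0, …, H k)` of pairwise distinct factor-components,
where for each `i` there is an `M`-ear relative to `H i` through `H (i+1)`. -/
def IsMEarSequence (G : SimpleGraph V) (M : Set (Sym2 V)) (k : ℕ)
    (H : Fin (k + 1) → Set V) : Prop :=
  (∀ i, IsFactorComponent G (H i)) ∧ Function.Injective H ∧
  ∀ i : Fin k, ∃ (u v : V) (p : G.Walk u v),
    IsMEarThrough G M (H i.castSucc) (H i.succ) p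

section Matchings

variable {W : Type*} {G : SimpleGraph V}

lemma DisjointEdges.eq_of_mem {M : Set (Sym2 V)} (hM : DisjointEdges M) {e f : Sym2 V}
    (he : e ∈ M) (hf : f ∈ M) {x : V} (hxe : x ∈ e) (hxf : x ∈ f) : e = f :=
  by_contra fun hne => hM e he f hf hne x hxe hxf

def IsPerfectMatchingOn (G : SimpleGraph V) (M : Set (Sym2 V)) (B : Set V) : Prop :=
  IsMatchingSet G M ∧ (∀ e ∈ M, ∀ x : V, x ∈ e → x ∈ B) ∧ ∀ v ∈ B, ∃ e ∈ M, v ∈ e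

namespace IsPerfectMatchingOn

variable {M : Set (Sym2 V)} {B : Set V}

lemma exists_adj (hM : IsPerfectMatchingOn G M B) {x : V} (hx : x ∈ B) :
    ∃ y, s(x, y) ∈ M ∧ G.Adj x y ∧ y ∈ B := by
  obtain ⟨e, he, hxe⟩ := hM.2.2 x hx
  obtain ⟨y, rfl⟩ := Sym2.mem_iff_exists.mp hxe
  exact ⟨y, he, hM.1.1 he, hM.2.1 _ he y (Sym2.mem_mk_right x y)⟩

lemma diff_edge (hM : IsPerfectMatchingOn G M B) {a b : V} (hab : s(a, b) ∈ M) :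
    IsPerfectMatchingOn G (M \ {s(a, b)}) (B \ {a, b}) := by
  refine ⟨⟨fun e he => hM.1.1 he.1, fun e he f hf => hM.1.2 e he.1 f hf.1⟩, ?_, ?_⟩
  · rintro e ⟨he, hne⟩ z hz
    refine ⟨hM.2.1 e he z hz, ?_⟩
    rintro (rfl | rfl)
    exacts [hne (hM.1.2.eq_of_mem he hab hz (Sym2.mem_mk_left _ _)),
      hne (hM.1.2.eq_of_mem he hab hz (Sym2.mem_mk_right _ _))]
  · rintro z ⟨hz, hzab⟩
    obtain ⟨e, he, hze⟩ := hM.2.2 z hz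
    refine ⟨e, ⟨he, ?_⟩, hze⟩
    rintro rfl
    exact hzab (Sym2.mem_iff.mp hze)

lemma insert_edge (hM : IsPerfectMatchingOn G M B) {a b : V} (hab : G.Adj a b) (ha : a ∉ B)
    (hb : b ∉ B) : IsPerfectMatchingOn G (insert s(a, b) M) (insert a (insert b B)) := by
  have hfresh : ∀ e ∈ M, ∀ z ∈ s(a, b), z ∉ e := by
    intro e he z hz hze
    rcases Sym2.mem_iff.mp hz with rfl | rfl
    exacts [ha (hM.2.1 e he _ hze), hb (hM.2.1 e he _ hze)]
  refine ⟨⟨?_, ?_⟩, ?_, ?_⟩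
  · rintro e (rfl | he)
    exacts [hab, hM.1.1 he]
  · rintro e (rfl | he) f (rfl | hf) hne z hze hzf
    · exact hne rfl
    · exact hfresh f hf z hze hzf
    · exact hfresh e he z hzf hze
    · exact hM.1.2 e he f hf hne z hze hzf
  · rintro e (rfl | he) z hz
    · rcases Sym2.mem_iff.mp hz with rfl | rfl <;> simp
    · exact .inr (.inr (hM.2.1 e he z hz))
  · rintro z (rfl | rfl | hz)
    · exact ⟨_, .inl rfl, Sym2.mem_mk_left _ _⟩
    · exact ⟨_, .inl rfl, Sym2.mem_mk_right _ _⟩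
    · obtain ⟨e, he, hze⟩ := hM.2.2 z hz
      exact ⟨e, .inr he, hze⟩

lemma image {H : SimpleGraph W} {N : Set (Sym2 W)} {B : Set W}
    (hN : IsPerfectMatchingOn H N B) {f : W → V} (hf : f.Injective)
    (hNG : ∀ e ∈ N, Sym2.map f e ∈ G.edgeSet) :
    IsPerfectMatchingOn G (Sym2.map f '' N) (f '' B) := by
  refine ⟨⟨?_, ?_⟩, ?_, ?_⟩
  · rintro _ ⟨e, he, rfl⟩
    exact hNG e he
  · rintro _ ⟨e, he, rfl⟩ _ ⟨e', he', rfl⟩ hne z hz hz'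
    obtain ⟨a, ha, rfl⟩ := Sym2.mem_map.mp hz
    obtain ⟨a', ha', hfa⟩ := Sym2.mem_map.mp hz'
    obtain rfl := hf hfa
    exact hne (congrArg _ (hN.1.2.eq_of_mem he he' ha ha'))
  · rintro _ ⟨e, he, rfl⟩ z hz
    obtain ⟨a, ha, rfl⟩ := Sym2.mem_map.mp hz
    exact ⟨a, hN.2.1 e he a ha, rfl⟩
  · rintro _ ⟨a, ha, rfl⟩
    obtain ⟨e, he, hae⟩ := hN.2.2 a ha
    exact ⟨_, ⟨e, he, rfl⟩, Sym2.mem_map.mpr ⟨a, hae, rfl⟩⟩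

lemma preimage {H : SimpleGraph W} (hM : IsPerfectMatchingOn G M B) {f : W → V}
    (hf : f.Injective) (hB : B ⊆ Set.range f) (hMH : ∀ e, Sym2.map f e ∈ M → e ∈ H.edgeSet) :
    IsPerfectMatchingOn H (Sym2.map f ⁻¹' M) (f ⁻¹' B) := by
  refine ⟨⟨hMH, ?_⟩, ?_, ?_⟩
  · intro e he e' he' hne z hz hz'
    exact hM.1.2 _ he _ he' ((Sym2.map.injective hf).ne hne) (f z)
      (Sym2.mem_map.mpr ⟨z, hz, rfl⟩) (Sym2.mem_map.mpr ⟨z, hz', rfl⟩)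
  · intro e he z hz
    exact hM.2.1 _ he (f z) (Sym2.mem_map.mpr ⟨z, hz, rfl⟩)
  · intro z hz
    obtain ⟨e, he, hze⟩ := hM.2.2 (f z) hz
    induction e using Sym2.ind with | _ a b => ?_
    obtain ⟨a, rfl⟩ := hB (hM.2.1 _ he a (Sym2.mem_mk_left a b))
    obtain ⟨b, rfl⟩ := hB (hM.2.1 _ he b (Sym2.mem_mk_right _ b))
    refine ⟨s(a, b), he, ?_⟩
    rcases Sym2.mem_iff.mp hze with h | h <;> simp [hf h]

end IsPerfectMatchingOn

section BalancedPath

variable {M N : Set (Sym2 V)} {u v : V}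

lemma mAlternating_of_forall_mem_or_mem (hN : DisjointEdges N) {p : G.Walk u v}
    (hp : ∀ e ∈ p.edges, e ∈ M ∨ e ∈ N) : MAlternating M p :=
  fun e he f hf heM hfM => hN e ((hp e he).resolve_left heM) f ((hp f hf).resolve_left hfM)

lemma isBalancedPath_congr {p : G.Walk u v} (h : ∀ e ∈ p.edges, e ∈ M ↔ e ∈ N) :
    IsBalancedPath M p ↔ IsBalancedPath N p := by
  have hhead : ∀ e ∈ p.edges.head?, e ∈ M ↔ e ∈ N := fun e he => h e (List.mem_of_mem_head? he)
  unfold IsBalancedPath MAlternating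
  constructor
  · rintro ⟨hp, hev, halt, hM⟩
    refine ⟨hp, hev, fun e he f hf heN hfN => halt e he f hf ?_ ?_, fun e he => ?_⟩
    exacts [mt (h e he).1 heN, mt (h f hf).1 hfN, (hhead e he).1 (hM e he)]
  · rintro ⟨hp, hev, halt, hN⟩
    refine ⟨hp, hev, fun e he f hf heM hfM => halt e he f hf ?_ ?_, fun e he => ?_⟩
    exacts [mt (h e he).2 heM, mt (h f hf).2 hfM, (hhead e he).2 (hN e he)]

/-- The second edge is not in the matching `M`, so by alternation the third one is. -/
lemma IsBalancedPath.tail₂ (hM : DisjointEdges M) {x y z : V} {hxy : G.Adj x y} {hyz : G.Adj y z}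
    {q : G.Walk z v} (h : IsBalancedPath M (.cons hxy (.cons hyz q))) : IsBalancedPath M q := by
  obtain ⟨hp, hev, halt, hhead⟩ := h
  rw [Walk.cons_isPath_iff, Walk.cons_isPath_iff, Walk.support_cons, List.mem_cons] at hp
  refine ⟨hp.1.1, by simpa [Nat.even_add_one] using hev,
    fun e he f hf => halt e (by simp [he]) f (by simp [hf]), ?_⟩
  cases q with
  | nil => simp
  | cons hzw q =>
    rename_i w
    simp only [Walk.edges_cons, List.head?_cons, Option.mem_def, Option.some.injEq, forall_eq']
    have hxyM : s(x, y) ∈ M := hhead _ rfl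
    have hxz : x ≠ z := fun h => hp.2 (.inr (by simp [h]))
    have hyw : y ≠ w := fun h => hp.1.2 (by simp [h])
    have hyzM : s(y, z) ∉ M := fun hyzM => hM _ hyzM _ hxyM (by simp [hxz.symm, hyz.ne'])
      y (Sym2.mem_mk_left y z) (Sym2.mem_mk_right x y)
    by_contra hzwM
    exact halt _ (by simp) _ (by simp) hyzM hzwM (by simp [hyw, hyz.ne])
      z (Sym2.mem_mk_right y z) (Sym2.mem_mk_left _ _)

end BalancedPath

section SymmetricDifference

/-- Starting at `x`, follow alternately the `M`-edge and the `N`-edge; since `N` misses only `x`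
among `A ∪ {s}`, this walk can only stop at `s`. -/
theorem exists_balancedPath_of_isPerfectMatchingOn {A : Set V} (hA : A.Finite) {s x : V}
    (hs : s ∉ A) (hx : x ∈ insert s A) {M N : Set (Sym2 V)} (hM : IsPerfectMatchingOn G M A)
    (hN : IsPerfectMatchingOn G N (insert s A \ {x})) :
    ∃ p : G.Walk x s, IsBalancedPath M p ∧ (∀ e ∈ p.edges, e ∈ M ∨ e ∈ N) ∧
      ∀ w ∈ p.support, w ≠ s → w ∈ A := by
  obtain rfl | hxA := hx
  · exact ⟨.nil, ⟨.nil, by simp, by simp [MAlternating], by simp⟩, by simp, by simp⟩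
  obtain ⟨v, hxvM, hxv, hvA⟩ := hM.exists_adj hxA
  obtain ⟨u, hvuN, hvu, hu⟩ := hN.exists_adj (x := v) ⟨.inr hvA, hxv.ne'⟩
  have hxs : x ≠ s := ne_of_mem_of_not_mem hxA hs
  have hvs : v ≠ s := ne_of_mem_of_not_mem hvA hs
  have hN' : (insert s A \ {x}) \ {v, u} = insert s (A \ {x, v}) \ {u} := by
    ext z
    simp only [Set.mem_insert_iff, Set.mem_sdiff, Set.mem_singleton_iff]
    grind
  have hu' : u ∈ insert s (A \ {x, v}) := by
    have := hvu.ne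
    simp only [Set.mem_insert_iff, Set.mem_sdiff, Set.mem_singleton_iff] at hu ⊢
    grind
  have hcard : (A \ {x, v}).ncard < A.ncard :=
    Set.ncard_lt_ncard (Set.sdiff_ssubset_left_iff.mpr ⟨x, hxA, .inl rfl⟩) hA
  obtain ⟨p, ⟨hp, hpev, -, -⟩, hpMN, hpA⟩ := exists_balancedPath_of_isPerfectMatchingOn
    hA.sdiff (fun h => hs h.1) hu' (hM.diff_edge hxvM) (hN' ▸ hN.diff_edge hvuN)
  have hvp : v ∉ p.support := fun h => (hpA v h hvs).2 (.inr rfl)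
  have hxp : x ∉ p.support := fun h => (hpA x h hxs).2 (.inl rfl)
  have hedges : ∀ e ∈ (Walk.cons hxv (.cons hvu p)).edges, e ∈ M ∨ e ∈ N := by
    simp only [Walk.edges_cons, List.mem_cons, forall_eq_or_imp]
    exact ⟨.inl hxvM, .inr hvuN, fun e he => (hpMN e he).imp And.left And.left⟩
  refine ⟨.cons hxv (.cons hvu p),
    ⟨?_, ?_, mAlternating_of_forall_mem_or_mem hN.1.2 hedges, ?_⟩, hedges, ?_⟩
  · simp [Walk.cons_isPath_iff, hp, hvp, hxp, hxv.ne]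
  · simpa [Nat.even_add_one] using hpev
  · simpa using hxvM
  · simp only [Walk.support_cons, List.mem_cons, forall_eq_or_imp]
    exact ⟨fun _ => hxA, fun _ => hvA, fun w hw hws => (hpA w hw hws).1⟩
termination_by A.ncard

theorem exists_isPerfectMatchingOn_of_isBalancedPath {s : V} :
    ∀ {x : V} {A : Set V} {M : Set (Sym2 V)} (p : G.Walk x s), IsPerfectMatchingOn G M A →
      s ∉ A → IsBalancedPath M p → (∀ w ∈ p.support, w ≠ s → w ∈ A) →
      ∃ N, IsPerfectMatchingOn G N (insert s A \ {x})
  | _, _, M, .nil, hM, hs, _, _ => ⟨M, by rwa [Set.insert_sdiff_self_of_notMem hs]⟩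
  | _, _, _, .cons _ .nil, _, _, hp, _ => absurd hp.2.1 (by simp)
  | x, A, M, .cons (v := v) hxv (.cons (v := u) hvu p), hM, hs, hp, hpA => by
    have hpath := hp.1
    simp only [Walk.cons_isPath_iff, Walk.support_cons, List.mem_cons, not_or] at hpath
    obtain ⟨⟨-, hvp⟩, hxv', hxp⟩ := hpath
    simp only [Walk.support_cons, List.mem_cons, forall_eq_or_imp] at hpA
    obtain ⟨hxA, hvA, hpA⟩ := hpA
    have hxs : x ≠ s := fun h => hxp (h ▸ p.end_mem_support)
    have hvs : v ≠ s := fun h => hvp (h ▸ p.end_mem_support)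
    replace hxA := hxA hxs
    replace hvA := hvA hvs
    have hxvM : s(x, v) ∈ M := hp.2.2.2 _ rfl
    have hpM : IsBalancedPath (M \ {s(x, v)}) p := by
      refine (isBalancedPath_congr fun e he => ⟨And.left, fun heM => ⟨heM, ?_⟩⟩).2
        (hp.tail₂ hM.1.2)
      rintro rfl
      exact hxp (p.fst_mem_support_of_mem_edges he)
    obtain ⟨N, hN⟩ := exists_isPerfectMatchingOn_of_isBalancedPath p (hM.diff_edge hxvM)
      (fun h => hs h.1) hpM fun w hw hws =>
        ⟨hpA w hw hws, by rintro (rfl | rfl) <;> contradiction⟩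
    have hxu : x ≠ u := fun h => hxp (h ▸ p.start_mem_support)
    have hu : u = s ∨ u ∈ A := or_iff_not_imp_left.mpr (hpA u p.start_mem_support)
    refine ⟨insert s(v, u) N, ?_⟩
    convert hN.insert_edge hvu (by simp [hvs, hvu.ne]) (by simp) using 1
    ext z
    simp only [Set.mem_insert_iff, Set.mem_sdiff, Set.mem_singleton_iff]
    grind

end SymmetricDifference

section FactorComponents

variable {M : Set (Sym2 V)} {X : Set V}

lemma IsFactorComponent.separating {C : Set V} (hC : IsFactorComponent G C) :
    Separating G C := by
  rintro _ ⟨c', rfl⟩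
  obtain ⟨c, rfl⟩ := hC
  by_cases h : c' = c
  · exact .inl (h ▸ le_rfl)
  · exact .inr ((allowedSubgraph G).pairwise_disjoint_supp_connectedComponent h)

lemma Separating.sdiff {Y : Set V} (hX : Separating G X) (hY : Separating G Y) :
    Separating G (X \ Y) := by
  intro C hC
  rcases hX C hC with hCX | hCX
  · rcases hY C hC with hCY | hCY
    · exact .inr (Set.disjoint_sdiff_right.mono_left hCY)
    · exact .inl (Set.subset_sdiff.mpr ⟨hCX, hCY⟩)
  · exact .inr (hCX.mono_right Set.sdiff_subset)

lemma Separating.mem_of_mem_perfectMatching (hX : Separating G X) (hM : IsPerfectMatchingSet G M)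
    {a b : V} (hab : s(a, b) ∈ M) (ha : a ∈ X) : b ∈ X := by
  have hadj : (allowedSubgraph G).Adj a b := ⟨hM.1.1 hab, M, hM, hab⟩
  rcases hX _ ⟨(allowedSubgraph G).connectedComponentMk a, rfl⟩ with h | h
  · exact h (ConnectedComponent.connectedComponentMk_eq_of_adj hadj).symm
  · exact absurd ha (Set.disjoint_left.mp h rfl)

lemma IsPerfectMatchingSet.isPerfectMatchingOn_inter_sym2 (hM : IsPerfectMatchingSet G M)
    (hX : Separating G X) : IsPerfectMatchingOn G (M ∩ X.sym2) X := by
  refine ⟨⟨fun e he => hM.1.1 he.1, fun e he f hf => hM.1.2 e he.1 f hf.1⟩,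
    fun e he z hz => Set.mem_sym2_iff_subset.mp he.2 hz, fun z hz => ?_⟩
  obtain ⟨e, he, hze⟩ := hM.2 z
  obtain ⟨w, rfl⟩ := Sym2.mem_iff_exists.mp hze
  exact ⟨s(z, w), ⟨he, hz, hX.mem_of_mem_perfectMatching hM he hz⟩, Sym2.mem_mk_left z w⟩

lemma isBalancedPath_inter_sym2_iff (hM : IsPerfectMatchingSet G M) (hX : Separating G X)
    {x y : V} {p : G.Walk x y} (hp : ∀ w ∈ p.support, w ≠ y → w ∈ X) :
    IsBalancedPath (M ∩ X.sym2) p ↔ IsBalancedPath M p := by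
  refine isBalancedPath_congr fun e he => ⟨And.left, fun heM => ⟨heM, ?_⟩⟩
  induction e using Sym2.ind with | _ a b => ?_
  have ha := hp a (p.fst_mem_support_of_mem_edges he)
  have hb := hp b (p.snd_mem_support_of_mem_edges he)
  have hba : s(b, a) ∈ M := Sym2.eq_swap ▸ heM
  by_cases hay : a = y
  · have hbX := hb fun hby => (p.edges_subset_edgeSet he).ne (hay.trans hby.symm)
    exact ⟨hX.mem_of_mem_perfectMatching hM hba hbX, hbX⟩
  · exact ⟨ha hay, hX.mem_of_mem_perfectMatching hM heM (ha hay)⟩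

end FactorComponents

section Contraction

variable {X S : Set V}

def contractRepr (s : V) : Option ↥(X \ S) → V := fun o => o.elim s Subtype.val

lemma contractRepr_injective {s : V} (hs : s ∈ S) :
    (contractRepr s : Option ↥(X \ S) → V).Injective := by
  rintro (_ | a) (_ | b) h
  · rfl
  · exact (b.2.2 ((show s = b.1 from h) ▸ hs)).elim
  · exact (a.2.2 ((show a.1 = s from h) ▸ hs)).elim
  · exact congrArg some (Subtype.ext h)

lemma range_contractRepr (s : V) :
    Set.range (contractRepr s : Option ↥(X \ S) → V) = insert s (X \ S) := by
  unfold contractRepr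
  rw [Option.range_elim, Subtype.range_coe]

lemma preimage_contractRepr {s : V} (hs : s ∈ S) (o : Option ↥(X \ S)) :
    contractRepr s ⁻¹' (insert s (X \ S) \ {contractRepr s o}) = {o}ᶜ := by
  ext z
  simp [← range_contractRepr s, (contractRepr_injective hs).eq_iff]

lemma contractOn_adj_of_adj {s : V} (hs : s ∈ S) {a b : Option ↥(X \ S)}
    (h : G.Adj (contractRepr s a) (contractRepr s b)) : (contractOn G X S).Adj a b := by
  cases a <;> cases b
  · exact G.loopless.irrefl s h
  · exact ⟨s, hs, h.symm⟩
  · exact ⟨s, hs, h⟩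
  · exact h

/-- `s` is a neighbour of the vertex matched to the contracted vertex. -/
lemma FactorCritical.exists_isPerfectMatchingOn (h : FactorCritical (contractOn G X S)) {x : V}
    (hx : x ∈ X \ S) : ∃ s ∈ S, ∃ N, IsPerfectMatchingOn G N (insert s (X \ S) \ {x}) := by
  obtain ⟨N, hN⟩ := h (some ⟨x, hx⟩)
  change IsPerfectMatchingOn _ N _ at hN
  obtain ⟨_ | w, hwN, hw, -⟩ := hN.exists_adj (x := none) (by simp)
  · exact hw.elim
  obtain ⟨s, hs, hws⟩ := hw
  have hNG : ∀ e ∈ N, Sym2.map (contractRepr s) e ∈ G.edgeSet := by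
    intro e he
    induction e using Sym2.ind with | _ a b => ?_
    have hab := hN.1.1 he
    have hnone : ∀ {c}, s(none, c) ∈ N → c = some w := fun hc =>
      Sym2.congr_right.mp (hN.1.2.eq_of_mem hc hwN (Sym2.mem_mk_left _ _) (Sym2.mem_mk_left _ _))
    cases a <;> cases b
    · exact hab.elim
    · cases hnone he
      exact hws.symm
    · cases hnone (Sym2.eq_swap ▸ he)
      exact hws
    · exact hab
  have hNs := hN.image (contractRepr_injective hs) hNG
  rw [Set.image_compl_eq_range_sdiff_image (contractRepr_injective hs), range_contractRepr,
    Set.image_singleton] at hNs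
  exact ⟨s, hs, _, hNs⟩

lemma hasPMOn_contractOn_compl {s : V} (hs : s ∈ S) (o : Option ↥(X \ S)) {N : Set (Sym2 V)}
    (hN : IsPerfectMatchingOn G N (insert s (X \ S) \ {contractRepr s o})) :
    HasPMOn (contractOn G X S) {o}ᶜ := by
  rw [← preimage_contractRepr hs o]
  refine ⟨_, hN.preimage (contractRepr_injective hs) ?_ fun e he => ?_⟩
  · rw [range_contractRepr]
    exact Set.sdiff_subset
  · induction e using Sym2.ind with | _ a b => exact contractOn_adj_of_adj hs (hN.1.1 he)

end Contraction

end Matchings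

theorem statement_6_general {V : Type*} [Fintype V] (G : SimpleGraph V)
    (M : Set (Sym2 V)) (hM : IsPerfectMatchingSet G M)
    (C1 : Set V) (hC1 : IsFactorComponent G C1)
    (X : Set V) (hXsep : Separating G X) (hC1X : C1 ⊆ X) :
    CriticalInducing G C1 X ↔
      ∀ x ∈ X \ C1, ∃ y ∈ C1, ∃ p : G.Walk x y,
        IsBalancedPath M p ∧ ∀ w ∈ p.support, w ≠ y → w ∈ X \ C1 := by
  have hA : Separating G (X \ C1) := hXsep.sdiff hC1.separating
  have hMA := hM.isPerfectMatchingOn_inter_sym2 hA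
  have hC1A : ∀ {y}, y ∈ C1 → y ∉ X \ C1 := fun hy h => h.2 hy
  constructor
  · rintro ⟨-, -, hcrit⟩ x hx
    obtain ⟨s, hs, N, hN⟩ := hcrit.exists_isPerfectMatchingOn hx
    obtain ⟨p, hp, -, hpA⟩ := exists_balancedPath_of_isPerfectMatchingOn (Set.toFinite _)
      (hC1A hs) (.inr hx) hMA hN
    exact ⟨s, hs, p, (isBalancedPath_inter_sym2_iff hM hA hpA).1 hp, hpA⟩
  · refine fun h => ⟨hXsep, hC1X, ?_⟩
    rintro (_ | x)
    · obtain ⟨c, rfl⟩ := hC1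
      obtain ⟨s, hs⟩ := c.nonempty_supp
      exact hasPMOn_contractOn_compl hs none (by rwa [contractRepr, Option.elim,
        Set.insert_sdiff_self_of_notMem (hC1A hs)])
    · obtain ⟨y, hy, p, hp, hpA⟩ := h x x.2
      obtain ⟨N, hN⟩ := exists_isPerfectMatchingOn_of_isBalancedPath p hMA (hC1A hy)
        ((isBalancedPath_inter_sym2_iff hM hA hpA).2 hp) hpA
      exact hasPMOn_contractOn_compl hy (some x) hN

/-- Let `G` be a factorizable finite simple graph, `M` a perfect matching,
`G1` a factor-component, and `X` a separating set with `V(G1) ⊆ X`. Then `X` is a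
critical-inducing set for `G1` iff for every `x ∈ X ∖ V(G1)` there is `y ∈ V(G1)` and an
`M`-balanced path from `x` to `y` all of whose vertices except `y` lie in `X ∖ V(G1)`. -/
theorem statement_6 {V : Type*} [Fintype V] (G : SimpleGraph V) (hG : Factorizable G)
    (M : Set (Sym2 V)) (hM : IsPerfectMatchingSet G M)
    (C1 : Set V) (hC1 : IsFactorComponent G C1)
    (X : Set V) (hXsep : Separating G X) (hC1X : C1 ⊆ X) :
    CriticalInducing G C1 X ↔
      ∀ x ∈ X \ C1, ∃ y ∈ C1, ∃ p : G.Walk x y,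
        IsBalancedPath M p ∧ ∀ w ∈ p.support, w ≠ y → w ∈ X \ C1 :=
  statement_6_general G M hM C1 hC1 X hXsep hC1X
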